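/- arXiv:2007.02354 — 3 statements merged into one kernel-verified Lean document; each statement's English description precedes it below -/
import Mathlib

section
/- For every continuous V : 𝕋^d → ℝ and every u ∈ L², the curve t ↦ Φ_t(u), viewed as a map from ℝ into the Hilbert space L², is differentiable at every t₀ ∈ ℝ with derivative −i·F(Φ_{t₀}(u)) = −i·(V⋆|u|²)·Φ_{t₀}(u); that is, (Φ_t(u))_{t∈ℝ} solves the differential equation i du/dt = F(u) in L². -/
open MeasureTheory Complex Real

noncomputable section

instance fact2pi : Fact (0 < 2 * Real.pi) := ⟨by positivity⟩

abbrev Torus (d : ℕ) := Fin d → AddCircle (2 * Real.pi)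

abbrev L2T (d : ℕ) := Lp ℂ 2 (volume : Measure (Torus d))

/-- The convolution `V ⋆ |u|²`. -/
def Vconv {d : ℕ} (V : C(Torus d, ℝ)) (u : L2T d) : Torus d → ℝ :=
  fun x => ∫ y, V (x - y) * ‖(u : Torus d → ℂ) y‖ ^ 2

/-- The nonlinearity `F(u) = (V ⋆ |u|²) · u` as a function. -/
def FFun {d : ℕ} (V : C(Torus d, ℝ)) (u : L2T d) : Torus d → ℂ :=
  fun x => (Vconv V u x : ℂ) * (u : Torus d → ℂ) x

/-- The flow `Φ_t(u) = exp(-i t (V ⋆ |u|²)) · u` as a function. -/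
def PhiFun {d : ℕ} (V : C(Torus d, ℝ)) (t : ℝ) (u : L2T d) : Torus d → ℂ :=
  fun x => Complex.exp (-(Complex.I * t * (Vconv V u x))) * (u : Torus d → ℂ) x

open Classical in
/-- `F(u)` as an element of `L²`. -/
def FL {d : ℕ} (V : C(Torus d, ℝ)) (u : L2T d) : L2T d :=
  if h : MemLp (FFun V u) 2 volume then h.toLp _ else 0

open Classical in
/-- `Φ_t(u)` as an element of `L²`. -/
def PhiL {d : ℕ} (V : C(Torus d, ℝ)) (t : ℝ) (u : L2T d) : L2T d :=
  if h : MemLp (PhiFun V t u) 2 volume then h.toLp _ else 0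

/-!
Since `|Φ_t(u)| = |u|`, the potential `W = V ⋆ |u|²` does not change along the orbit, so
`Φ_t(u) = e^{-itW} u` is a fixed function times a phase; `W` is continuous, hence bounded by
some `M` on the compact torus. The pointwise Taylor bound `|e^{-iθ} - 1 + iθ| ≤ θ²` for
`|θ| ≤ 1`, with `θ = (t - t₀) W`, bounds the `L²` remainder by `M² (t - t₀)² ‖u‖`, which is
`o(t - t₀)`.
-/

open Filter Asymptotics Topology
open scoped ENNReal

lemma norm_exp_neg_I_mul_sub_one_add_I_mul_le {θ : ℝ} (hθ : |θ| ≤ 1) :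
    ‖exp (-(I * θ)) - 1 + I * θ‖ ≤ θ ^ 2 := by
  have hnorm : ‖-(I * θ)‖ = |θ| := by simp
  have h := norm_exp_sub_one_sub_id_le (x := -(I * θ)) (hnorm ▸ hθ)
  rwa [sub_neg_eq_add, hnorm, sq_abs] at h

lemma norm_exp_mul_sub_sub_le {w M t t₀ : ℝ} (hw : |w| ≤ M) (ht : |t - t₀| * M ≤ 1) (z : ℂ) :
    ‖exp (-(I * t * w)) * z - exp (-(I * t₀ * w)) * z
      - (t - t₀) • (-I) • (w * (exp (-(I * t₀ * w)) * z))‖ ≤ M ^ 2 * (t - t₀) ^ 2 * ‖z‖ := by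
  set θ := (t - t₀) * w
  have hsplit : exp (-(I * t * w)) = exp (-(I * θ)) * exp (-(I * t₀ * w)) := by
    rw [← Complex.exp_add]; push_cast [θ]; ring_nf
  have hremainder : exp (-(I * t * w)) * z - exp (-(I * t₀ * w)) * z
      - (t - t₀) • (-I) • (w * (exp (-(I * t₀ * w)) * z))
      = (exp (-(I * θ)) - 1 + I * θ) * (exp (-(I * t₀ * w)) * z) := by
    simp only [hsplit, real_smul, smul_eq_mul, θ]
    push_cast
    ring
  have hθ : |θ| ≤ 1 := (abs_mul _ _).trans_le <|
    (mul_le_mul_of_nonneg_left hw (abs_nonneg _)).trans ht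
  have hphase : ‖exp (-(I * t₀ * w))‖ = 1 := by simp [norm_exp]
  have hw_sq : w ^ 2 ≤ M ^ 2 := sq_le_sq' (abs_le.mp hw).1 (abs_le.mp hw).2
  calc _ = ‖exp (-(I * θ)) - 1 + I * θ‖ * ‖z‖ := by
        rw [hremainder, norm_mul, norm_mul, hphase, one_mul]
    _ ≤ θ ^ 2 * ‖z‖ := by gcongr; exact norm_exp_neg_I_mul_sub_one_add_I_mul_le hθ
    _ ≤ M ^ 2 * (t - t₀) ^ 2 * ‖z‖ := by rw [mul_pow, mul_comm (M ^ 2)]; gcongr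

section ExpMulCurve

variable {α : Type*} [MeasurableSpace α] {μ : Measure α} {p : ℝ≥0∞} [Fact (1 ≤ p)]

theorem hasDerivAt_of_ae_eq_exp_mul {W : α → ℝ} {M : ℝ} (hWM : ∀ᵐ x ∂μ, |W x| ≤ M)
    {f : Lp ℂ p μ} {γ : ℝ → Lp ℂ p μ} (hγ : ∀ t, γ t =ᵐ[μ] fun x => exp (-(I * t * W x)) * f x)
    {g : Lp ℂ p μ} {t₀ : ℝ} (hg : g =ᵐ[μ] fun x => W x * (exp (-(I * t₀ * W x)) * f x)) :
    HasDerivAt γ ((-I) • g) t₀ := by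
  rw [hasDerivAt_iff_isLittleO]
  refine IsBigO.trans_isLittleO ?_ (isLittleO_pow_sub_sub t₀ one_lt_two)
  have hsmall : ∀ᶠ t in 𝓝 t₀, |t - t₀| * M < 1 :=
    Tendsto.eventually_lt_const one_pos <|
      (by fun_prop : Continuous fun t => |t - t₀| * M).tendsto' t₀ 0 (by simp)
  refine IsBigO.of_bound (M ^ 2 * ‖f‖) (hsmall.mono fun t ht => ?_)
  rw [norm_pow, norm_norm, Real.norm_eq_abs, sq_abs, mul_right_comm]
  refine Lp.norm_le_mul_norm_of_ae_le_mul ?_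
  filter_upwards [Lp.coeFn_sub (γ t - γ t₀) ((t - t₀) • (-I) • g),
    Lp.coeFn_sub (γ t) (γ t₀), Lp.coeFn_smul (t - t₀) ((-I) • g), Lp.coeFn_smul (-I) g,
    hγ t, hγ t₀, hg, hWM] with x h₁ h₂ h₃ h₄ hγt hγt₀ hgx hWx
  rw [h₁, Pi.sub_apply, h₂, Pi.sub_apply, h₃, Pi.smul_apply, h₄, Pi.smul_apply, hγt, hγt₀, hgx]
  exact norm_exp_mul_sub_sub_le hWx ht.le (f x)

end ExpMulCurve

section Torus

variable {d : ℕ} (V : C(Torus d, ℝ)) (u : L2T d)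

lemma integrable_norm_sq_L2T : Integrable (fun y => ‖(u : Torus d → ℂ) y‖ ^ 2) := by
  simpa using (Lp.memLp u).integrable_norm_pow two_ne_zero

lemma continuous_vconv : Continuous (Vconv V u) := by
  have h := (HasCompactSupport.of_compactSpace (V : Torus d → ℝ)).continuous_convolution_right
    (ContinuousLinearMap.mul ℝ ℝ) (integrable_norm_sq_L2T u).locallyIntegrable V.continuous
  convert h using 1
  funext x
  rw [convolution_def]
  simp only [Vconv, ContinuousLinearMap.mul_apply', mul_comm]

lemma abs_vconv_le (x : Torus d) : |Vconv V u x| ≤ ‖V‖ * ∫ y, ‖(u : Torus d → ℂ) y‖ ^ 2 := by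
  rw [← integral_const_mul]
  refine (abs_integral_le_integral_abs).trans <| integral_mono_of_nonneg
    (.of_forall fun y => abs_nonneg _) ((integrable_norm_sq_L2T u).const_mul _)
    (.of_forall fun y => ?_)
  dsimp only
  rw [abs_mul, abs_of_nonneg (by positivity : (0 : ℝ) ≤ ‖(u : Torus d → ℂ) y‖ ^ 2)]
  gcongr
  exact V.norm_coe_le_norm (x - y)

lemma norm_phiFun (t : ℝ) (x : Torus d) : ‖PhiFun V t u x‖ = ‖(u : Torus d → ℂ) x‖ := by
  simp [PhiFun, norm_exp]

lemma memLp_phiFun (t : ℝ) : MemLp (PhiFun V t u) 2 := by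
  have hphase : Continuous fun x => exp (-(I * t * (Vconv V u x : ℂ))) := by
    have := continuous_vconv V u
    fun_prop
  exact (Lp.memLp u).of_le (hphase.aestronglyMeasurable.mul (Lp.aestronglyMeasurable u))
    (.of_forall fun x => (norm_phiFun V u t x).le)

lemma coeFn_phiL (t : ℝ) : PhiL V t u =ᵐ[volume] PhiFun V t u := by
  rw [PhiL, dif_pos (memLp_phiFun V u t)]
  exact MemLp.coeFn_toLp _

lemma vconv_phiL (t : ℝ) : Vconv V (PhiL V t u) = Vconv V u := by
  funext x
  refine integral_congr_ae ?_
  filter_upwards [coeFn_phiL V u t] with y hy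
  rw [hy, norm_phiFun]

lemma fFun_phiL_ae_eq (t : ℝ) :
    FFun V (PhiL V t u) =ᵐ[volume] fun x => (Vconv V u x : ℂ) * PhiFun V t u x := by
  filter_upwards [coeFn_phiL V u t] with x hx
  rw [FFun, vconv_phiL, hx]

lemma memLp_fFun_phiL (t : ℝ) : MemLp (FFun V (PhiL V t u)) 2 := by
  refine MemLp.ae_eq (fFun_phiL_ae_eq V u t).symm ?_
  refine (Lp.memLp u).of_le_mul (c := ‖V‖ * ∫ y, ‖(u : Torus d → ℂ) y‖ ^ 2)
    (((continuous_ofReal.comp (continuous_vconv V u)).aestronglyMeasurable).mul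
      (memLp_phiFun V u t).aestronglyMeasurable) (.of_forall fun x => ?_)
  rw [norm_mul, norm_phiFun, norm_real, Real.norm_eq_abs]
  gcongr
  exact abs_vconv_le V u x

lemma coeFn_FL_phiL (t : ℝ) :
    FL V (PhiL V t u) =ᵐ[volume] fun x => (Vconv V u x : ℂ) * PhiFun V t u x := by
  rw [FL, dif_pos (memLp_fFun_phiL V u t)]
  exact (MemLp.coeFn_toLp _).trans (fFun_phiL_ae_eq V u t)

end Torus

theorem stmt6_general (d : ℕ) (V : C(Torus d, ℝ)) (u : L2T d) (t₀ : ℝ) :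
    HasDerivAt (fun t : ℝ => PhiL V t u) ((-Complex.I) • FL V (PhiL V t₀ u)) t₀ :=
  hasDerivAt_of_ae_eq_exp_mul (.of_forall (abs_vconv_le V u)) (coeFn_phiL V u)
    (coeFn_FL_phiL V u t₀)

/-- The curve `t ↦ Φ_t(u)`, as a map from `ℝ` to `L²`, is differentiable at every `t₀` with
derivative `−i F(Φ_{t₀}(u))`; i.e. it solves `i du/dt = F(u)` in `L²`. -/
theorem stmt6 (d : ℕ) (hd : 1 ≤ d) (V : C(Torus d, ℝ)) (u : L2T d) (t₀ : ℝ) :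
    HasDerivAt (fun t : ℝ => PhiL V t u) ((-Complex.I) • FL V (PhiL V t₀ u)) t₀ :=
  stmt6_general d V u t₀
end
end

section
/- Removal of the exponential weight in error estimates: let (Ω, ℱ, ℙ) be a probability space and e, S : Ω → [0,∞) be measurable random variables. Let r ∈ (0,∞), σ ∈ (0,∞), K ∈ [0,∞), μ̄ ∈ (0,∞), p ∈ (1,∞), and set μ := (1 − 1/p)μ̄. Let τ ∈ (0,1) and A, B, D ∈ (0,∞) be such that 𝔼[exp(μ̄ S)] ≤ A, 𝔼[e^{pr}] ≤ B, and 𝔼[exp(−prK S) e^{pr}] ≤ D τ^{prσ/2}. Then there exists a constant C ∈ (0,∞), depending only on r, σ, K, μ̄, p, A, B, D (and not on τ), such that 𝔼[e^r] ≤ C τ^{(rσ/2)·θ}, where θ = 1 if rK ≤ μ and θ = μ/(rK) if rK > μ. -/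
open MeasureTheory Real

/-! Write `e^r = (e^r exp(-mS)) · exp(mS)` with `m = θ r K ≤ μ` and apply Hölder's inequality with
exponents `p` and `q = p/(p-1)`. Since `q μ = μ̄`, the second factor is controlled by the
exponential moment of `S`; the first, `𝔼[exp(-θ prK S) e^{pr}]`, interpolates (Hölder with exponents
`1/θ`, `1/(1-θ)`) between the discounted bound `D τ^{prσ/2}` and the moment bound `B`. -/

section

variable {Ω : Type*} [MeasurableSpace Ω] {P : Measure Ω}

theorem lintegral_ofReal_exp_mul_mono {S : Ω → ℝ} (hS : ∀ ω, 0 ≤ S ω) {a b : ℝ} (hab : a ≤ b) :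
    ∫⁻ ω, ENNReal.ofReal (exp (a * S ω)) ∂P ≤ ∫⁻ ω, ENNReal.ofReal (exp (b * S ω)) ∂P :=
  lintegral_mono fun ω =>
    ENNReal.ofReal_le_ofReal <| exp_le_exp.mpr <| mul_le_mul_of_nonneg_right hab (hS ω)

theorem lintegral_exp_mul_le_interpolate
    {S h : Ω → ℝ} (hS : AEMeasurable S P) (hh : AEMeasurable h P) (h_nonneg : ∀ ω, 0 ≤ h ω)
    (a : ℝ) {θ : ℝ} (hθ₀ : 0 ≤ θ) (hθ₁ : θ ≤ 1) :
    ∫⁻ ω, ENNReal.ofReal (exp (-(θ * a) * S ω) * h ω) ∂P ≤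
      (∫⁻ ω, ENNReal.ofReal (exp (-a * S ω) * h ω) ∂P) ^ θ *
        (∫⁻ ω, ENNReal.ofReal (h ω) ∂P) ^ (1 - θ) := by
  have split : ∀ ω, ENNReal.ofReal (exp (-(θ * a) * S ω) * h ω) =
      ENNReal.ofReal (exp (-a * S ω) * h ω) ^ θ * ENNReal.ofReal (h ω) ^ (1 - θ) := fun ω => by
    have hω := h_nonneg ω
    rw [ENNReal.ofReal_rpow_of_nonneg (by positivity) hθ₀,
      ENNReal.ofReal_rpow_of_nonneg hω (by linarith), ← ENNReal.ofReal_mul (by positivity),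
      mul_rpow (exp_pos _).le hω, ← exp_mul, mul_assoc, ← rpow_add' hω (by norm_num),
      add_sub_cancel, rpow_one]
    ring_nf
  simp_rw [split]
  exact ENNReal.lintegral_mul_norm_pow_le (by fun_prop) (by fun_prop) hθ₀ (by linarith) (by ring)

theorem lintegral_le_of_exp_weight
    {S g : Ω → ℝ} (hS : AEMeasurable S P) (hg : AEMeasurable g P) (g_nonneg : ∀ ω, 0 ≤ g ω)
    {p q : ℝ} (hpq : p.HolderConjugate q) (m : ℝ) :
    ∫⁻ ω, ENNReal.ofReal (g ω) ∂P ≤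
      (∫⁻ ω, ENNReal.ofReal (exp (-(p * m) * S ω) * g ω ^ p) ∂P) ^ (1 / p) *
        (∫⁻ ω, ENNReal.ofReal (exp (q * m * S ω)) ∂P) ^ (1 / q) := by
  have split : ∀ ω, ENNReal.ofReal (g ω) =
      ENNReal.ofReal (exp (-m * S ω) * g ω) * ENNReal.ofReal (exp (m * S ω)) := fun ω => by
    rw [← ENNReal.ofReal_mul (mul_nonneg (exp_pos _).le (g_nonneg ω)), mul_right_comm,
      ← exp_add, neg_mul, neg_add_cancel, exp_zero, one_mul]
  have weighted_pow : ∀ ω, ENNReal.ofReal (exp (-m * S ω) * g ω) ^ p =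
      ENNReal.ofReal (exp (-(p * m) * S ω) * g ω ^ p) := fun ω => by
    rw [ENNReal.ofReal_rpow_of_nonneg (mul_nonneg (exp_pos _).le (g_nonneg ω)) hpq.nonneg,
      mul_rpow (exp_pos _).le (g_nonneg ω), ← exp_mul]
    ring_nf
  have weight_pow : ∀ ω, ENNReal.ofReal (exp (m * S ω)) ^ q =
      ENNReal.ofReal (exp (q * m * S ω)) := fun ω => by
    rw [ENNReal.ofReal_rpow_of_nonneg (exp_pos _).le hpq.symm.nonneg, ← exp_mul]
    ring_nf
  simp_rw [split, ← weighted_pow, ← weight_pow]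
  exact ENNReal.lintegral_mul_le_Lp_mul_Lq P hpq (by fun_prop) (by fun_prop)

end

theorem ite_one_div_mem_Icc {x μ : ℝ} (hμ : 0 ≤ μ) :
    (if x ≤ μ then 1 else μ / x) ∈ Set.Icc 0 1 := by
  split_ifs with h
  · exact ⟨zero_le_one, le_rfl⟩
  · have hx : 0 < x := hμ.trans_lt (not_le.mp h)
    exact ⟨div_nonneg hμ hx.le, (div_le_one hx).mpr (not_le.mp h).le⟩

theorem ite_one_div_mul_le {x μ : ℝ} (hμ : 0 ≤ μ) :
    (if x ≤ μ then 1 else μ / x) * x ≤ μ := by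
  split_ifs with h
  · rwa [one_mul]
  · rw [div_mul_cancel₀ _ (hμ.trans_lt (not_le.mp h)).ne']

theorem ofReal_interpolation_bound_eq {A B D τ p q θ s : ℝ} (hA : 0 ≤ A) (hB : 0 ≤ B)
    (hD : 0 ≤ D) (hτ : 0 ≤ τ) (hp : 0 < p) (hq : 0 ≤ q) (hθ₀ : 0 ≤ θ) (hθ₁ : θ ≤ 1) :
    (ENNReal.ofReal (D * τ ^ (p * s)) ^ θ * ENNReal.ofReal B ^ (1 - θ)) ^ (1 / p) *
        ENNReal.ofReal A ^ (1 / q) =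
      ENNReal.ofReal (D ^ (θ / p) * B ^ ((1 - θ) / p) * A ^ (1 / q) * τ ^ (s * θ)) := by
  have h1θ : 0 ≤ 1 - θ := sub_nonneg.mpr hθ₁
  rw [ENNReal.ofReal_rpow_of_nonneg (by positivity) hθ₀,
    ENNReal.ofReal_rpow_of_nonneg hB h1θ, ← ENNReal.ofReal_mul (by positivity),
    ENNReal.ofReal_rpow_of_nonneg (by positivity) (by positivity),
    ENNReal.ofReal_rpow_of_nonneg hA (by positivity), ← ENNReal.ofReal_mul (by positivity)]
  congr 1
  rw [mul_rpow hD (by positivity), mul_rpow (by positivity) (by positivity),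
    mul_rpow (by positivity) (by positivity), ← rpow_mul hτ, ← rpow_mul hτ, ← rpow_mul hD,
    ← rpow_mul hB]
  rw [show p * s * θ * (1 / p) = s * θ by field_simp]
  ring_nf

theorem stmt10_general {Ω : Type*} [MeasurableSpace Ω] (P : Measure Ω)
    (r σ K μbar p : ℝ) (hμbar : 0 < μbar)
    (hp : 1 < p) (A B D : ℝ) (hA : 0 < A) (hB : 0 < B) (hD : 0 < D) :
    ∃ C : ℝ, 0 < C ∧
      ∀ τ : ℝ, τ ∈ Set.Ioo (0 : ℝ) 1 →
      ∀ e S : Ω → ℝ, Measurable e → Measurable S →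
        (∀ ω, 0 ≤ e ω) → (∀ ω, 0 ≤ S ω) →
        (∫⁻ ω, ENNReal.ofReal (Real.exp (μbar * S ω)) ∂P) ≤ ENNReal.ofReal A →
        (∫⁻ ω, ENNReal.ofReal (e ω ^ (p * r)) ∂P) ≤ ENNReal.ofReal B →
        (∫⁻ ω, ENNReal.ofReal (Real.exp (-(p * r * K) * S ω) * e ω ^ (p * r)) ∂P) ≤
          ENNReal.ofReal (D * τ ^ (p * r * σ / 2)) →
        (∫⁻ ω, ENNReal.ofReal (e ω ^ r) ∂P) ≤
          ENNReal.ofReal (C * τ ^ (r * σ / 2 *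
            (if r * K ≤ (1 - 1 / p) * μbar then 1 else ((1 - 1 / p) * μbar) / (r * K)))) := by
  have hpq := Real.HolderConjugate.conjExponent hp
  set q := p.conjExponent
  have hqμ : q * ((1 - 1 / p) * μbar) = μbar := by
    rw [one_div, hpq.one_sub_inv, ← mul_assoc, mul_inv_cancel₀ hpq.symm.ne_zero, one_mul]
  have hμ : 0 ≤ (1 - 1 / p) * μbar :=
    mul_nonneg (sub_nonneg.mpr ((div_le_one hpq.pos).mpr hp.le)) hμbar.le
  set μ := (1 - 1 / p) * μbar
  set θ := if r * K ≤ μ then 1 else μ / (r * K)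
  obtain ⟨hθ₀, hθ₁⟩ : θ ∈ Set.Icc 0 1 := ite_one_div_mem_Icc hμ
  refine ⟨D ^ (θ / p) * B ^ ((1 - θ) / p) * A ^ (1 / q), by positivity, ?_⟩
  rintro τ ⟨hτ, -⟩ e S he hS he₀ hS₀ hA' hB' hD'
  have weight_bound :
      ∫⁻ ω, ENNReal.ofReal (exp (q * (θ * (r * K)) * S ω)) ∂P ≤ ENNReal.ofReal A :=
    (lintegral_ofReal_exp_mul_mono hS₀ (hqμ ▸ mul_le_mul_of_nonneg_left
      (ite_one_div_mul_le hμ) hpq.symm.nonneg)).trans hA'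
  have interpolated : ∫⁻ ω, ENNReal.ofReal
      (exp (-(p * (θ * (r * K))) * S ω) * (e ω ^ r) ^ p) ∂P ≤
      ENNReal.ofReal (D * τ ^ (p * (r * σ / 2))) ^ θ * ENNReal.ofReal B ^ (1 - θ) := by
    have hpr : ∀ ω, (e ω ^ r) ^ p = e ω ^ (p * r) := fun ω => by
      rw [← rpow_mul (he₀ ω), mul_comm]
    simp_rw [hpr, show p * (θ * (r * K)) = θ * (p * r * K) by ring,
      show p * (r * σ / 2) = p * r * σ / 2 by ring]
    refine (lintegral_exp_mul_le_interpolate hS.aemeasurable (by fun_prop)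
      (fun ω => rpow_nonneg (he₀ ω) _) _ hθ₀ hθ₁).trans ?_
    gcongr
  calc ∫⁻ ω, ENNReal.ofReal (e ω ^ r) ∂P
      ≤ (∫⁻ ω, ENNReal.ofReal (exp (-(p * (θ * (r * K))) * S ω) * (e ω ^ r) ^ p) ∂P) ^ (1 / p) *
          (∫⁻ ω, ENNReal.ofReal (exp (q * (θ * (r * K)) * S ω)) ∂P) ^ (1 / q) :=
        lintegral_le_of_exp_weight hS.aemeasurable (by fun_prop)
          (fun ω => rpow_nonneg (he₀ ω) _) hpq _
    _ ≤ (ENNReal.ofReal (D * τ ^ (p * (r * σ / 2))) ^ θ * ENNReal.ofReal B ^ (1 - θ)) ^ (1 / p) *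
          ENNReal.ofReal A ^ (1 / q) := by
      gcongr
      exact one_div_nonneg.mpr hpq.symm.nonneg
    _ = _ := ofReal_interpolation_bound_eq hA.le hB.le hD.le hτ.le hpq.pos hpq.symm.nonneg hθ₀ hθ₁

/-- Removal of the exponential weight in error estimates: if `𝔼[exp(μ̄ S)] ≤ A`,
`𝔼[e^{pr}] ≤ B` and `𝔼[exp(−prK S) e^{pr}] ≤ D τ^{prσ/2}`, then with `μ = (1 − 1/p)μ̄` one has
`𝔼[e^r] ≤ C τ^{(rσ/2)θ}` where `θ = 1` if `rK ≤ μ` and `θ = μ/(rK)` otherwise, for a constant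
`C` depending only on `r, σ, K, μ̄, p, A, B, D` and not on `τ`. -/
theorem stmt10 {Ω : Type*} [MeasurableSpace Ω] (P : Measure Ω) [IsProbabilityMeasure P]
    (r σ K μbar p : ℝ) (hr : 0 < r) (hσ : 0 < σ) (hK : 0 ≤ K) (hμbar : 0 < μbar)
    (hp : 1 < p) (A B D : ℝ) (hA : 0 < A) (hB : 0 < B) (hD : 0 < D) :
    ∃ C : ℝ, 0 < C ∧
      ∀ τ : ℝ, τ ∈ Set.Ioo (0 : ℝ) 1 →
      ∀ e S : Ω → ℝ, Measurable e → Measurable S →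
        (∀ ω, 0 ≤ e ω) → (∀ ω, 0 ≤ S ω) →
        (∫⁻ ω, ENNReal.ofReal (Real.exp (μbar * S ω)) ∂P) ≤ ENNReal.ofReal A →
        (∫⁻ ω, ENNReal.ofReal (e ω ^ (p * r)) ∂P) ≤ ENNReal.ofReal B →
        (∫⁻ ω, ENNReal.ofReal (Real.exp (-(p * r * K) * S ω) * e ω ^ (p * r)) ∂P) ≤
          ENNReal.ofReal (D * τ ^ (p * r * σ / 2)) →
        (∫⁻ ω, ENNReal.ofReal (e ω ^ r) ∂P) ≤
          ENNReal.ofReal (C * τ ^ (r * σ / 2 *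
            (if r * K ≤ (1 - 1 / p) * μbar then 1 else ((1 - 1 / p) * μbar) / (r * K)))) :=
  stmt10_general P r σ K μbar p hμbar hp A B D hA hB hD
end

section
/- For every continuous V : 𝕋^d → ℝ, the map F : L² → L², F(u) = (V⋆|u|²)·u, viewed as a map between L² considered as a real Banach space, is Fréchet differentiable at every u ∈ L², with derivative given by F′(u).h = (V⋆|u|²)·h + 2 (V⋆Re(ū h))·u for all h ∈ L², where Re(ū h) denotes the pointwise real part of the product of the conjugate of u with h. -/
open MeasureTheory Complex Real

noncomputable section

/-- The convolution `V ⋆ Re(conj g · h)` for `g, h ∈ L²`. -/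
def Vconv2 {d : ℕ} (V : C(Torus d, ℝ)) (g h : L2T d) : Torus d → ℝ :=
  fun x => ∫ y, V (x - y) * ((starRingEnd ℂ) ((g : Torus d → ℂ) y) * (h : Torus d → ℂ) y).re

/-- The candidate derivative `F′(u).h = (V⋆|u|²)·h + 2 (V⋆Re(ū h))·u` as a function. -/
def DFun {d : ℕ} (V : C(Torus d, ℝ)) (u h : L2T d) : Torus d → ℂ :=
  fun x => (Vconv V u x : ℂ) * (h : Torus d → ℂ) x
    + 2 * (Vconv2 V u h x : ℂ) * (u : Torus d → ℂ) x

open Classical in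
/-- `F′(u).h` as an element of `L²`. -/
def DL {d : ℕ} (V : C(Torus d, ℝ)) (u h : L2T d) : L2T d :=
  if hm : MemLp (DFun V u h) 2 volume then hm.toLp _ else 0


/-!
Write `F(u) = M (K (ρ u u)) u`, where `ρ f g = ⟪f, g⟫_ℝ` pointwise (for `ℂ` this is `Re(f̄ g)`)
is a bounded bilinear map `L² × L² → L¹` by Hölder, `K f = f ⋆ V` is a bounded linear map
`L¹ → L∞` since `V` is bounded, and `M c f = c • f` is a bounded bilinear map `L∞ × L² → L²`.
So `F` is a composition of bounded multilinear maps and the product rule gives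
`F'(u) h = M (K (ρ u u)) h + M (K (ρ u h + ρ h u)) u`; symmetry of `ρ` merges the last two
terms into `2 ρ u h`.
-/

open ContinuousLinearMap
open scoped Convolution ENNReal

section PointwiseInner

variable {α E : Type*} [MeasurableSpace α] {μ : Measure α}
  [NormedAddCommGroup E] [InnerProductSpace ℝ E]

variable (μ) in
def pointwiseInnerL : Lp E 2 μ →L[ℝ] Lp E 2 μ →L[ℝ] Lp ℝ 1 μ :=
  (innerSL ℝ).holderL μ 2 2 1

lemma coeFn_pointwiseInnerL (f g : Lp E 2 μ) :
    pointwiseInnerL μ f g =ᵐ[μ] fun x => inner ℝ (f x) (g x) :=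
  (innerSL ℝ).coeFn_holder f g

lemma pointwiseInnerL_comm (f g : Lp E 2 μ) :
    pointwiseInnerL μ f g = pointwiseInnerL μ g f :=
  Lp.ext <| by
    filter_upwards [coeFn_pointwiseInnerL f g, coeFn_pointwiseInnerL g f] with x hfg hgf
    rw [hfg, hgf, real_inner_comm]

lemma hasFDerivAt_pointwiseInnerL_self (u : Lp E 2 μ) :
    HasFDerivAt (fun v => pointwiseInnerL μ v v) ((2 : ℝ) • pointwiseInnerL μ u) u := by
  refine ((pointwiseInnerL μ).hasFDerivAt_of_bilinear (hasFDerivAt_id u)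
    (hasFDerivAt_id u)).congr_fderiv ?_
  ext h : 1
  simp only [id_eq, precompR_apply, compL_apply, comp_id, add_apply, precompL_apply, id_apply,
    pointwiseInnerL_comm h u, two_smul]

end PointwiseInner

section PointwiseSMul

variable {α E : Type*} [MeasurableSpace α] {μ : Measure α}
  [NormedAddCommGroup E] [NormedSpace ℝ E]

variable (μ) in
def pointwiseSMulL : Lp ℝ ∞ μ →L[ℝ] Lp E 2 μ →L[ℝ] Lp E 2 μ :=
  (lsmul ℝ ℝ).holderL μ ∞ 2 2

lemma coeFn_pointwiseSMulL (c : Lp ℝ ∞ μ) (f : Lp E 2 μ) :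
    pointwiseSMulL μ c f =ᵐ[μ] fun x => c x • f x :=
  (lsmul ℝ ℝ).coeFn_holder c f

end PointwiseSMul

section Convolution

variable {G : Type*} [MeasurableSpace G] [TopologicalSpace G] [AddGroup G] [CompactSpace G]
  {μ : Measure G}

lemma norm_convolution_le (f : Lp ℝ 1 μ) (V : C(G, ℝ)) (x : G) :
    ‖(f ⋆[mul ℝ ℝ, μ] V) x‖ ≤ ‖V‖ * ‖f‖ := by
  rw [L1.norm_eq_integral_norm, ← integral_const_mul, convolution_mul]
  refine norm_integral_le_of_norm_le ((L1.integrable_coeFn f).norm.const_mul _)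
    (ae_of_all _ fun t => ?_)
  rw [norm_mul, mul_comm]
  exact mul_le_mul_of_nonneg_right (V.norm_coe_le_norm _) (norm_nonneg _)

variable [IsTopologicalAddGroup G] [BorelSpace G]

lemma convolutionExists_of_integrable {f : G → ℝ} (hf : Integrable f μ) (V : C(G, ℝ)) :
    ConvolutionExists f V (mul ℝ ℝ) μ := fun _ =>
  hf.mul_bdd (V.continuous.comp (continuous_const.sub continuous_id)).aestronglyMeasurable
    (ae_of_all _ fun _ => V.norm_coe_le_norm _)

variable [SecondCountableTopology G]

lemma memLp_top_convolution (f : Lp ℝ 1 μ) (V : C(G, ℝ)) :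
    MemLp (f ⋆[mul ℝ ℝ, μ] V) ∞ μ := by
  have hV : BddAbove (Set.range fun x => ‖V x‖) := (isCompact_range V.continuous.norm).bddAbove
  refine memLp_top_of_bound ?_ _ (ae_of_all _ (norm_convolution_le f V))
  exact (hV.continuous_convolution_right_of_integrable _ (L1.integrable_coeFn f)
    V.continuous).aestronglyMeasurable

variable [SFinite μ] [μ.IsAddRightInvariant]

variable (μ) in
def convolutionL (V : C(G, ℝ)) : Lp ℝ 1 μ →L[ℝ] Lp ℝ ∞ μ :=
  LinearMap.mkContinuous
    { toFun f := (memLp_top_convolution f V).toLp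
      map_add' f g := by
        rw [← MemLp.toLp_add]
        refine MemLp.toLp_congr _ _ (.of_eq ?_)
        rw [convolution_congr _ (Lp.coeFn_add f g) .rfl, ConvolutionExists.add_distrib
          (convolutionExists_of_integrable (L1.integrable_coeFn f) V)
          (convolutionExists_of_integrable (L1.integrable_coeFn g) V)]
      map_smul' c f := by
        rw [← MemLp.toLp_const_smul]
        refine MemLp.toLp_congr _ _ (.of_eq ?_)
        rw [convolution_congr _ (Lp.coeFn_smul c f) .rfl, smul_convolution]
        rfl }
    ‖V‖ fun f => by
      change ‖(memLp_top_convolution f V).toLp‖ ≤ ‖V‖ * ‖f‖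
      rw [Lp.norm_toLp, eLpNorm_exponent_top]
      exact ENNReal.toReal_le_of_le_ofReal (by positivity)
        (eLpNormEssSup_le_of_ae_bound (ae_of_all _ (norm_convolution_le f V)))

lemma coeFn_convolutionL (V : C(G, ℝ)) (f : Lp ℝ 1 μ) :
    convolutionL μ V f =ᵐ[μ] f ⋆[mul ℝ ℝ, μ] V :=
  (memLp_top_convolution f V).coeFn_toLp

end Convolution

section Hartree

variable {G E : Type*} [MeasurableSpace G] [TopologicalSpace G] [AddGroup G] [CompactSpace G]
  [IsTopologicalAddGroup G] [BorelSpace G] [SecondCountableTopology G]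
  {μ : Measure G} [SFinite μ] [μ.IsAddRightInvariant]
  [NormedAddCommGroup E] [InnerProductSpace ℝ E]

variable (μ) in
def hartree (V : C(G, ℝ)) (u : Lp E 2 μ) : Lp E 2 μ :=
  pointwiseSMulL μ (convolutionL μ V (pointwiseInnerL μ u u)) u

variable (μ) in
def hartreeDeriv (V : C(G, ℝ)) (u : Lp E 2 μ) : Lp E 2 μ →L[ℝ] Lp E 2 μ :=
  pointwiseSMulL μ (convolutionL μ V (pointwiseInnerL μ u u))
    + (pointwiseSMulL μ).flip u ∘L convolutionL μ V ∘L ((2 : ℝ) • pointwiseInnerL μ u)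

lemma hartreeDeriv_apply (V : C(G, ℝ)) (u h : Lp E 2 μ) :
    hartreeDeriv μ V u h = pointwiseSMulL μ (convolutionL μ V (pointwiseInnerL μ u u)) h
      + (2 : ℝ) • pointwiseSMulL μ (convolutionL μ V (pointwiseInnerL μ u h)) u := by
  simp only [hartreeDeriv, add_apply, coe_comp, Function.comp_apply, smul_apply, map_smul,
    flip_apply]

lemma hasFDerivAt_hartree (V : C(G, ℝ)) (u : Lp E 2 μ) :
    HasFDerivAt (hartree μ V) (hartreeDeriv μ V u) u := by
  have hconv := (convolutionL μ V).hasFDerivAt.comp u (hasFDerivAt_pointwiseInnerL_self u)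
  refine ((pointwiseSMulL μ).hasFDerivAt_of_bilinear hconv (hasFDerivAt_id u)).congr_fderiv ?_
  ext h : 1
  rfl

end Hartree

open Classical in
lemma dite_toLp_eq_of_ae_eq {α E : Type*} [MeasurableSpace α] {μ : Measure α}
    [NormedAddCommGroup E] {p : ℝ≥0∞} [Fact (1 ≤ p)] {f : α → E} {F : Lp E p μ}
    (h : f =ᵐ[μ] F) : (if hf : MemLp f p μ then hf.toLp f else 0) = F := by
  rw [dif_pos ((Lp.memLp F).ae_eq h.symm)]
  exact Lp.ext ((MemLp.coeFn_toLp _).trans h)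

section Torus

variable {d : ℕ} (V : C(Torus d, ℝ))

lemma Vconv_eq_convolution (u : L2T d) :
    Vconv V u = pointwiseInnerL volume u u ⋆[mul ℝ ℝ, volume] V := by
  ext x
  rw [convolution_mul]
  refine integral_congr_ae ?_
  filter_upwards [coeFn_pointwiseInnerL u u] with y hy
  rw [hy, real_inner_self_eq_norm_sq, mul_comm]

lemma Vconv2_eq_convolution (g h : L2T d) :
    Vconv2 V g h = pointwiseInnerL volume g h ⋆[mul ℝ ℝ, volume] V := by
  ext x
  rw [convolution_mul]
  refine integral_congr_ae ?_
  filter_upwards [coeFn_pointwiseInnerL g h] with y hy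
  rw [hy, Complex.inner, mul_comm (h y), mul_comm]

lemma FL_eq_hartree : FL V = hartree volume V := by
  ext1 v
  refine dite_toLp_eq_of_ae_eq ?_
  filter_upwards [coeFn_pointwiseSMulL (convolutionL volume V (pointwiseInnerL volume v v)) v,
    coeFn_convolutionL V (pointwiseInnerL volume v v)] with x hsmul hconv
  rw [hartree, hsmul, hconv, ← Vconv_eq_convolution, Complex.real_smul, FFun]

lemma DL_eq_hartreeDeriv (u h : L2T d) : DL V u h = hartreeDeriv volume V u h := by
  set c₁ := convolutionL volume V (pointwiseInnerL volume u u)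
  set c₂ := convolutionL volume V (pointwiseInnerL volume u h)
  refine dite_toLp_eq_of_ae_eq ?_
  rw [hartreeDeriv_apply]
  filter_upwards [Lp.coeFn_add (pointwiseSMulL volume c₁ h) ((2 : ℝ) • pointwiseSMulL volume c₂ u),
    Lp.coeFn_smul (2 : ℝ) (pointwiseSMulL volume c₂ u),
    coeFn_pointwiseSMulL c₁ h, coeFn_pointwiseSMulL c₂ u,
    coeFn_convolutionL V (pointwiseInnerL volume u u),
    coeFn_convolutionL V (pointwiseInnerL volume u h)] with x hadd htwo hc₁h hc₂u hconv₁ hconv₂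
  rw [hadd, Pi.add_apply, htwo, Pi.smul_apply, hc₁h, hc₂u, hconv₁, hconv₂,
    ← Vconv_eq_convolution, ← Vconv2_eq_convolution, DFun]
  simp only [Complex.real_smul]
  push_cast
  ring

end Torus

theorem stmt13_general (d : ℕ) (V : C(Torus d, ℝ)) (u : L2T d) :
    ∃ f' : L2T d →L[ℝ] L2T d, (∀ h : L2T d, f' h = DL V u h) ∧
      HasFDerivAt (fun v : L2T d => FL V v) f' u :=
  ⟨hartreeDeriv volume V u, fun h => (DL_eq_hartreeDeriv V u h).symm,
    FL_eq_hartree V ▸ hasFDerivAt_hartree V u⟩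

/-- The map `F : L² → L²`, `F(u) = (V⋆|u|²)·u`, viewed over `ℝ`, is Fréchet differentiable at
every `u ∈ L²`, with derivative `h ↦ (V⋆|u|²)·h + 2 (V⋆Re(ū h))·u`. -/
theorem stmt13 (d : ℕ) (hd : 1 ≤ d) (V : C(Torus d, ℝ)) (u : L2T d) :
    ∃ f' : L2T d →L[ℝ] L2T d, (∀ h : L2T d, f' h = DL V u h) ∧
      HasFDerivAt (fun v : L2T d => FL V v) f' u :=
  stmt13_general d V u
end
end
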